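/- arXiv:1703.08940 — 6 statements merged into one kernel-verified Lean document; each statement's English description precedes it below -/
import Mathlib

section
/- For every 1 ≤ j ≤ i ≤ n and every 1 ≤ k ≤ n, the set R = {(b'_k, d'_k), (b_{k+1}, c'_j), (a'_i, d_{k+1})} ∪ {(a_{i−t}, c_{j−t}) : 0 ≤ t ≤ j−2} ∪ {(a_{i−j+1}, c_1)} is an admissible matching of the hard instance, and its total cost equals −3M² + w(i,k) + w(k,j) + w(i,j). -/
/-- A node of a caterpillar: `(false, a)` is the spine node of index `a`,
and `(true, a)` is the leaf of index `a`. -/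
abbrev CatNode : Type := Bool × ℕ

/-- Proper-ancestor relation in a caterpillar: the spine node of index `a` is a strict
ancestor of the spine node of index `b` iff `a < b`, and an ancestor of the leaf of
index `b` iff `a ≤ b`; leaves have no proper descendants. -/
def Anc (u v : CatNode) : Prop :=
  u.1 = false ∧ ((v.1 = false ∧ u.2 < v.2) ∨ (v.1 = true ∧ u.2 ≤ v.2))

/-- Preorder position in the left caterpillar with `n` spine nodes:
the preorder is `f_1, …, f_n, f'_n, f'_{n-1}, …, f'_1`. -/
def posF (n : ℕ) (u : CatNode) : ℕ := if u.1 then 2 * n + 1 - u.2 else u.2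

/-- Preorder position in the right caterpillar: the preorder is `g_1, g'_1, g_2, g'_2, …`. -/
def posG (u : CatNode) : ℕ := if u.1 then 2 * u.2 else 2 * u.2 - 1

/-- A valid matching between the left caterpillar with `n` spine nodes and the right
caterpillar with `m` spine nodes. -/
def ValidMatching (n m : ℕ) (R : Finset (CatNode × CatNode)) : Prop :=
  (∀ p ∈ R, 1 ≤ p.1.2 ∧ p.1.2 ≤ n ∧ 1 ≤ p.2.2 ∧ p.2.2 ≤ m) ∧
  (∀ p ∈ R, ∀ q ∈ R, p ≠ q → p.1 ≠ q.1 ∧ p.2 ≠ q.2) ∧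
  (∀ p ∈ R, ∀ q ∈ R, (Anc p.1 q.1 ↔ Anc p.2 q.2)) ∧
  (∀ p ∈ R, ∀ q ∈ R, (posF n p.1 < posF n q.1 ↔ posG p.2 < posG q.2))

/- Hard instance: the left tree `F` is the left caterpillar with `2n+1` spine nodes
`a_1, …, a_n, b_1, …, b_{n+1}` (so `a_t` is the spine node of index `t` and `b_t` the spine
node of index `n + t`), with leaves `a'_t = (true, t)` and `b'_t = (true, n + t)`.
The right tree `G` is the right caterpillar with `2n+1` spine nodes
`c_1, …, c_n, d_1, …, d_{n+1}` and leaves `c'_t, d'_t`, indexed in the same way. -/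

/-- The allowed pairs of the hard instance: `(b'_k, d'_k)` for `1 ≤ k ≤ n`;
`(b_{k+1}, c'_j)` for `1 ≤ k, j ≤ n`; `(a'_i, d_{k+1})` for `1 ≤ i, k ≤ n`;
and `(a_i, c_j)` for `1 ≤ i, j ≤ n`. -/
def Allowed (n : ℕ) (p : CatNode × CatNode) : Prop :=
  (∃ k, 1 ≤ k ∧ k ≤ n ∧ p = ((true, n + k), (true, n + k))) ∨
  (∃ k j, 1 ≤ k ∧ k ≤ n ∧ 1 ≤ j ∧ j ≤ n ∧ p = ((false, n + k + 1), (true, j))) ∨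
  (∃ i k, 1 ≤ i ∧ i ≤ n ∧ 1 ≤ k ∧ k ≤ n ∧ p = ((true, i), (false, n + k + 1))) ∨
  (∃ i j, 1 ≤ i ∧ i ≤ n ∧ 1 ≤ j ∧ j ≤ n ∧ p = ((false, i), (false, j)))

/-- The cost of an allowed pair of the hard instance:
`cost (b'_k, d'_k) = -M² - 2Mk`, `cost (b_{k+1}, c'_j) = -M² + Mk + Mj + w k j`,
`cost (a'_i, d_{k+1}) = -M² + Mk + Mi + w i k`,
`cost (a_i, c_j) = -2M + w i j - w (i-1) (j-1)` for `2 ≤ i, j`,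
`cost (a_i, c_1) = -M(i+1) + w i 1` and `cost (a_1, c_j) = -M(j+1) + w 1 j`. -/
def cost (n : ℕ) (w : ℕ → ℕ → ℤ) (M : ℤ) : CatNode × CatNode → ℤ
  | ((true, x), (true, _)) => -M ^ 2 - 2 * M * ((x - n : ℕ) : ℤ)
  | ((false, x), (true, j)) =>
      -M ^ 2 + M * ((x - (n + 1) : ℕ) : ℤ) + M * (j : ℤ) + w (x - (n + 1)) j
  | ((true, i), (false, y)) =>
      -M ^ 2 + M * ((y - (n + 1) : ℕ) : ℤ) + M * (i : ℤ) + w i (y - (n + 1))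
  | ((false, i), (false, j)) =>
      if j = 1 then -(M * ((i : ℤ) + 1)) + w i 1
      else if i = 1 then -(M * ((j : ℤ) + 1)) + w 1 j
      else -2 * M + w i j - w (i - 1) (j - 1)

/-- An admissible matching of the hard instance: a valid matching between the two
caterpillars with `2n+1` spine nodes each, all of whose pairs are allowed pairs. -/
def Admissible (n : ℕ) (R : Finset (CatNode × CatNode)) : Prop :=
  ValidMatching (2 * n + 1) (2 * n + 1) R ∧ ∀ p ∈ R, Allowed n p

/-!
The three pairs involving a leaf cost `-3M² + M(i+j) + w(k,j) + w(i,k)` together. Along the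
diagonal chain `(a_{i-t}, c_{j-t})`, `t < j-1`, the costs `-2M + w(i-t, j-t) - w(i-t-1, j-t-1)`
telescope to `-2M(j-1) + w(i,j) - w(i-j+1, 1)`, and the bottom pair `(a_{i-j+1}, c_1)`, of cost
`-M(i-j+2) + w(i-j+1, 1)`, cancels the leftover `w` term and every multiple of `M`. Validity is a
finite check: listed in preorder, the pairs read `a_{i-j+1}, …, a_i, b_{k+1}, b'_k, a'_i` in `F`
and `c_1, …, c_j, c'_j, d'_k, d_{k+1}` in `G`, and ancestry agrees pair by pair.
-/

open Finset

def crossPairs (n i j k : ℕ) : Finset (CatNode × CatNode) :=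
  {((true, n + k), (true, n + k)), ((false, n + k + 1), (true, j)),
    ((true, i), (false, n + k + 1))}

def diagonalPairs (i j : ℕ) : Finset (CatNode × CatNode) :=
  (range (j - 1)).image fun t => ((false, i - t), (false, j - t))

def hardMatching (n i j k : ℕ) : Finset (CatNode × CatNode) :=
  crossPairs n i j k ∪ diagonalPairs i j ∪ {((false, i - j + 1), (false, 1))}

section Matching

variable {n i j k : ℕ}

lemma mem_hardMatching (hj1 : 1 ≤ j) (hji : j ≤ i) {p : CatNode × CatNode} :
    p ∈ hardMatching n i j k ↔
      p = ((true, n + k), (true, n + k)) ∨ p = ((false, n + k + 1), (true, j)) ∨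
      p = ((true, i), (false, n + k + 1)) ∨ ∃ t < j, p = ((false, i - t), (false, j - t)) := by
  obtain ⟨j, rfl⟩ : ∃ j', j = j' + 1 := ⟨j - 1, by omega⟩
  have hlast : i - (j + 1) + 1 = i - j := by omega
  simp only [hardMatching, crossPairs, diagonalPairs, mem_union, mem_insert, mem_singleton, mem_image, mem_range,
    Nat.exists_lt_succ_right, add_tsub_cancel_right, add_tsub_cancel_left, hlast]
  grind

lemma hardMatching_bounds (hj1 : 1 ≤ j) (hji : j ≤ i) (hin : i ≤ n) (hk1 : 1 ≤ k)
    (hkn : k ≤ n) :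
    ∀ p ∈ hardMatching n i j k,
      1 ≤ p.1.2 ∧ p.1.2 ≤ 2 * n + 1 ∧ 1 ≤ p.2.2 ∧ p.2.2 ≤ 2 * n + 1 := by
  intro p hp
  rcases (mem_hardMatching hj1 hji).1 hp with rfl | rfl | rfl | ⟨t, ht, rfl⟩ <;> simp <;> omega

lemma hardMatching_injective (hj1 : 1 ≤ j) (hji : j ≤ i) (hin : i ≤ n) (hk1 : 1 ≤ k) :
    ∀ p ∈ hardMatching n i j k, ∀ q ∈ hardMatching n i j k, p ≠ q → p.1 ≠ q.1 ∧ p.2 ≠ q.2 := by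
  intro p hp q hq hpq
  rcases (mem_hardMatching hj1 hji).1 hp with rfl | rfl | rfl | ⟨t, ht, rfl⟩ <;>
    rcases (mem_hardMatching hj1 hji).1 hq with rfl | rfl | rfl | ⟨s, hs, rfl⟩ <;>
    simp_all [Prod.ext_iff] <;> omega

lemma hardMatching_anc_iff (hj1 : 1 ≤ j) (hji : j ≤ i) (hin : i ≤ n) (hk1 : 1 ≤ k) :
    ∀ p ∈ hardMatching n i j k, ∀ q ∈ hardMatching n i j k, (Anc p.1 q.1 ↔ Anc p.2 q.2) := by
  intro p hp q hq
  rcases (mem_hardMatching hj1 hji).1 hp with rfl | rfl | rfl | ⟨t, ht, rfl⟩ <;>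
    rcases (mem_hardMatching hj1 hji).1 hq with rfl | rfl | rfl | ⟨s, hs, rfl⟩ <;>
    simp [Anc] <;> omega

lemma hardMatching_posF_lt_iff (hj1 : 1 ≤ j) (hji : j ≤ i) (hin : i ≤ n) (hk1 : 1 ≤ k)
    (hkn : k ≤ n) :
    ∀ p ∈ hardMatching n i j k, ∀ q ∈ hardMatching n i j k,
      (posF (2 * n + 1) p.1 < posF (2 * n + 1) q.1 ↔ posG p.2 < posG q.2) := by
  intro p hp q hq
  rcases (mem_hardMatching hj1 hji).1 hp with rfl | rfl | rfl | ⟨t, ht, rfl⟩ <;>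
    rcases (mem_hardMatching hj1 hji).1 hq with rfl | rfl | rfl | ⟨s, hs, rfl⟩ <;>
    simp [posF, posG] <;> omega

lemma hardMatching_allowed (hj1 : 1 ≤ j) (hji : j ≤ i) (hin : i ≤ n) (hk1 : 1 ≤ k)
    (hkn : k ≤ n) : ∀ p ∈ hardMatching n i j k, Allowed n p := by
  intro p hp
  rcases (mem_hardMatching hj1 hji).1 hp with rfl | rfl | rfl | ⟨t, ht, rfl⟩
  · exact Or.inl ⟨k, hk1, hkn, rfl⟩
  · exact Or.inr <| Or.inl ⟨k, j, hk1, hkn, hj1, by omega, rfl⟩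
  · exact Or.inr <| Or.inr <| Or.inl ⟨i, k, by omega, hin, hk1, hkn, rfl⟩
  · exact Or.inr <| Or.inr <| Or.inr ⟨i - t, j - t, by omega, by omega, by omega, by omega, rfl⟩

theorem admissible_hardMatching (hj1 : 1 ≤ j) (hji : j ≤ i) (hin : i ≤ n) (hk1 : 1 ≤ k)
    (hkn : k ≤ n) : Admissible n (hardMatching n i j k) :=
  ⟨⟨hardMatching_bounds hj1 hji hin hk1 hkn, hardMatching_injective hj1 hji hin hk1,
    hardMatching_anc_iff hj1 hji hin hk1, hardMatching_posF_lt_iff hj1 hji hin hk1 hkn⟩,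
    hardMatching_allowed hj1 hji hin hk1 hkn⟩

end Matching

section Cost

variable {n : ℕ} (w : ℕ → ℕ → ℤ) (M : ℤ)

lemma cost_leaf_leaf (k : ℕ) :
    cost n w M ((true, n + k), (true, n + k)) = -M ^ 2 - 2 * M * k := by
  simp [cost]

lemma cost_spine_leaf (k j : ℕ) :
    cost n w M ((false, n + k + 1), (true, j)) = -M ^ 2 + M * k + M * j + w k j := by
  simp [cost, show n + k + 1 - (n + 1) = k by omega]

lemma cost_leaf_spine (i k : ℕ) :
    cost n w M ((true, i), (false, n + k + 1)) = -M ^ 2 + M * k + M * i + w i k := by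
  simp [cost, show n + k + 1 - (n + 1) = k by omega]

lemma cost_spine_one (i : ℕ) :
    cost n w M ((false, i), (false, 1)) = -(M * (i + 1)) + w i 1 := by
  simp [cost]

lemma cost_spine_spine {i j : ℕ} (hi : 2 ≤ i) (hj : 2 ≤ j) :
    cost n w M ((false, i), (false, j)) = -2 * M + (w i j - w (i - 1) (j - 1)) := by
  simp only [cost, if_neg (show j ≠ 1 by omega), if_neg (show i ≠ 1 by omega)]
  ring

lemma sum_cost_diagonal {i j s : ℕ} (hsi : s < i) (hsj : s < j) :
    ∑ t ∈ range s, cost n w M ((false, i - t), (false, j - t)) =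
      -2 * M * s + (w i j - w (i - s) (j - s)) := by
  induction s with
  | zero => simp
  | succ s ih =>
    rw [sum_range_succ, ih (by omega) (by omega), cost_spine_spine w M (by omega) (by omega),
      show i - s - 1 = i - (s + 1) by omega, show j - s - 1 = j - (s + 1) by omega]
    push_cast
    ring

lemma sum_cost_crossPairs (i j k : ℕ) :
    ∑ p ∈ crossPairs n i j k, cost n w M p = -3 * M ^ 2 + M * (i + j) + w k j + w i k := by
  rw [crossPairs, sum_insert (by simp), sum_insert (by simp), sum_singleton, cost_leaf_leaf,
    cost_spine_leaf, cost_leaf_spine]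
  ring

lemma sum_cost_diagonalPairs {i j : ℕ} (hj1 : 1 ≤ j) (hji : j ≤ i) :
    ∑ p ∈ diagonalPairs i j, cost n w M p = -2 * M * (j - 1) + (w i j - w (i - j + 1) 1) := by
  have hinj : Set.InjOn (fun t => (((false, i - t) : CatNode), ((false, j - t) : CatNode)))
      (range (j - 1)) := by
    intro t ht s hs h
    simp only [coe_range, Set.mem_Iio, Prod.ext_iff] at ht hs h
    omega
  rw [diagonalPairs, sum_image hinj, sum_cost_diagonal w M (by omega) (by omega),
    show i - (j - 1) = i - j + 1 by omega, show j - (j - 1) = 1 by omega]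
  push_cast [hj1]
  ring

theorem sum_cost_hardMatching {i j k : ℕ} (hj1 : 1 ≤ j) (hji : j ≤ i) :
    ∑ p ∈ hardMatching n i j k, cost n w M p = -3 * M ^ 2 + (w i k + w k j + w i j) := by
  have hcross : Disjoint (crossPairs n i j k) (diagonalPairs i j) := by
    simp only [crossPairs, diagonalPairs, disjoint_left, mem_insert, mem_singleton, mem_image]
    rintro p (rfl | rfl | rfl) ⟨t, -, h⟩ <;> simp [Prod.ext_iff] at h
  have hbottom : ((false, i - j + 1), (false, 1)) ∉ crossPairs n i j k ∪ diagonalPairs i j := by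
    simp [crossPairs, diagonalPairs, Prod.ext_iff]
    omega
  rw [hardMatching, sum_union (disjoint_singleton_right.2 hbottom), sum_union hcross,
    sum_cost_crossPairs, sum_cost_diagonalPairs w M hj1 hji, sum_singleton, cost_spine_one]
  push_cast [hji]
  ring

end Cost

theorem stmt2_general (n : ℕ) (w : ℕ → ℕ → ℤ)
    (M : ℤ) (i j k : ℕ) (hj1 : 1 ≤ j) (hji : j ≤ i) (hin : i ≤ n)
    (hk1 : 1 ≤ k) (hkn : k ≤ n) :
    let R : Finset (CatNode × CatNode) :=
      ({(((true, n + k) : CatNode), ((true, n + k) : CatNode)),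
        (((false, n + k + 1) : CatNode), ((true, j) : CatNode)),
        (((true, i) : CatNode), ((false, n + k + 1) : CatNode))} :
          Finset (CatNode × CatNode))
      ∪ (Finset.range (j - 1)).image
          (fun t => (((false, i - t) : CatNode), ((false, j - t) : CatNode)))
      ∪ {(((false, i - j + 1) : CatNode), ((false, 1) : CatNode))}
    Admissible n R ∧
      ∑ p ∈ R, cost n w M p = -3 * M ^ 2 + (w i k + w k j + w i j) := by
  intro R
  exact ⟨admissible_hardMatching hj1 hji hin hk1 hkn, sum_cost_hardMatching w M hj1 hji⟩

/-- The explicit matching `{(b'_k, d'_k), (b_{k+1}, c'_j), (a'_i, d_{k+1})}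
∪ {(a_{i-t}, c_{j-t}) : 0 ≤ t ≤ j-2} ∪ {(a_{i-j+1}, c_1)}` is an admissible matching of the
hard instance, of total cost `-3M² + w(i,k) + w(k,j) + w(i,j)`. -/
theorem stmt2 (n : ℕ) (hn : 1 ≤ n) (w : ℕ → ℕ → ℤ)
    (hsym : ∀ i j, 1 ≤ i → i ≤ n → 1 ≤ j → j ≤ n → w i j = w j i)
    (M : ℤ) (i j k : ℕ) (hj1 : 1 ≤ j) (hji : j ≤ i) (hin : i ≤ n)
    (hk1 : 1 ≤ k) (hkn : k ≤ n) :
    let R : Finset (CatNode × CatNode) :=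
      ({(((true, n + k) : CatNode), ((true, n + k) : CatNode)),
        (((false, n + k + 1) : CatNode), ((true, j) : CatNode)),
        (((true, i) : CatNode), ((false, n + k + 1) : CatNode))} :
          Finset (CatNode × CatNode))
      ∪ (Finset.range (j - 1)).image
          (fun t => (((false, i - t) : CatNode), ((false, j - t) : CatNode)))
      ∪ {(((false, i - j + 1) : CatNode), ((false, 1) : CatNode))}
    Admissible n R ∧
      ∑ p ∈ R, cost n w M p = -3 * M ^ 2 + (w i k + w k j + w i j) :=
  stmt2_general n w M i j k hj1 hji hin hk1 hkn
end

section
/- Let n ≥ 2 and m ≥ 1 be integers, and for every integer t ≥ 1 let ν(t) denote the largest integer e ≥ 0 such that n^e divides t. Then the maximum, over all integers r ≥ 0 and all sequences of integers m ≥ t_1 > t_2 > ⋯ > t_r ≥ 1 satisfying ν(t_1) ≤ ν(t_2) ≤ ⋯ ≤ ν(t_r) and such that for every e the number of indices i with ν(t_i) = e is at most n−1, of the sum Σ_{i=1}^{r} n^{ν(t_i)}, equals m. -/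
/-- `nu n t` is the largest integer `e ≥ 0` such that `n ^ e` divides `t`
(for `n ≥ 2` and `t ≥ 1`). -/
noncomputable def nu (n t : ℕ) : ℕ := sSup {e : ℕ | n ^ e ∣ t}

/-!
Upper bound: since `ν` is nondecreasing along the chain, `n ^ ν(t_i)` divides both `t_i` and
`t_{i+1}`, so `n ^ ν(t_i) ≤ t_i - t_{i+1}` and the sum telescopes to at most `t_1 ≤ m`.

Attainment: take the greedy chain `t_1 = m`, `t_{i+1} = t_i - n ^ ν(t_i)` until it reaches `0`;
its sum telescopes to `m`. Each step lowers the lowest nonzero base-`n` digit by one and leaves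
the other digits alone, so exactly `digit n e m ≤ n - 1` steps have `ν = e`.
-/

open Finset

section Telescoping

variable {M : Type*} [AddCommMonoid M]

theorem sum_range_add_eq_of_eq_add {f u : ℕ → M} {r : ℕ}
    (h : ∀ k < r, u k = f k + u (k + 1)) : ∑ k ∈ range r, f k + u r = u 0 := by
  induction r with
  | zero => simp
  | succ r ih => rw [sum_range_succ, add_assoc, ← h r (by omega), ih fun k hk => h k (by omega)]

theorem sum_range_add_le_of_add_le [PartialOrder M] [IsOrderedAddMonoid M] {f u : ℕ → M}
    {r : ℕ} (h : ∀ k < r, f k + u (k + 1) ≤ u k) : ∑ k ∈ range r, f k + u r ≤ u 0 := by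
  induction r with
  | zero => simp
  | succ r ih =>
    calc ∑ k ∈ range (r + 1), f k + u (r + 1) = ∑ k ∈ range r, f k + (f r + u (r + 1)) := by
          rw [sum_range_succ, add_assoc]
      _ ≤ ∑ k ∈ range r, f k + u r := by gcongr; exact h r (by omega)
      _ ≤ u 0 := ih fun k hk => h k (by omega)

theorem sum_Icc_one_eq_sum_range (f : ℕ → M) (r : ℕ) :
    ∑ i ∈ Icc 1 r, f i = ∑ k ∈ range r, f (k + 1) := by
  rw [← Ico_add_one_right_eq_Icc, sum_Ico_eq_sum_range]
  simp [add_comm]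

end Telescoping

section Valuation

variable {n t : ℕ}

theorem nu_isGreatest (hn : 2 ≤ n) (ht : t ≠ 0) : IsGreatest {e | n ^ e ∣ t} (nu n t) := by
  have hbdd : BddAbove {e | n ^ e ∣ t} :=
    ⟨t, fun e he => (Nat.lt_pow_self hn).le.trans (Nat.le_of_dvd (Nat.pos_of_ne_zero ht) he)⟩
  exact ⟨Nat.sSup_mem ⟨0, by simp⟩ hbdd, fun e he => le_csSup hbdd he⟩

theorem pow_nu_dvd (hn : 2 ≤ n) (ht : t ≠ 0) : n ^ nu n t ∣ t :=
  (nu_isGreatest hn ht).1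

theorem le_nu_of_pow_dvd {e : ℕ} (hn : 2 ≤ n) (ht : t ≠ 0) (h : n ^ e ∣ t) : e ≤ nu n t :=
  (nu_isGreatest hn ht).2 h

theorem not_dvd_div_pow_nu (hn : 2 ≤ n) (ht : t ≠ 0) : ¬ n ∣ t / n ^ nu n t := fun h => by
  have := le_nu_of_pow_dvd hn ht
    (pow_succ n (nu n t) ▸ Nat.mul_dvd_of_dvd_div (pow_nu_dvd hn ht) h)
  omega

theorem pow_nu_add_le {x y : ℕ} (hn : 2 ≤ n) (hy : y ≠ 0) (hyx : y < x)
    (hν : nu n x ≤ nu n y) : n ^ nu n x + y ≤ x := by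
  have hdvd : n ^ nu n x ∣ x - y :=
    Nat.dvd_sub (pow_nu_dvd hn (by omega)) ((pow_dvd_pow n hν).trans (pow_nu_dvd hn hy))
  have := Nat.le_of_dvd (by omega) hdvd
  omega

end Valuation

theorem sum_range_pow_nu_le {n r : ℕ} {u : ℕ → ℕ} (hn : 2 ≤ n)
    (hpos : ∀ k < r, u k ≠ 0) (hlt : ∀ k, k + 1 < r → u (k + 1) < u k)
    (hν : ∀ k, k + 1 < r → nu n (u k) ≤ nu n (u (k + 1))) :
    ∑ k ∈ range r, n ^ nu n (u k) ≤ u 0 := by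
  cases r with
  | zero => simp
  | succ r =>
    have hchain : ∑ k ∈ range r, n ^ nu n (u k) + u r ≤ u 0 :=
      sum_range_add_le_of_add_le fun k hk =>
        pow_nu_add_le hn (hpos _ (by omega)) (hlt k (by omega)) (hν k (by omega))
    have hlast : n ^ nu n (u r) ≤ u r :=
      Nat.le_of_dvd (Nat.pos_of_ne_zero (hpos r (by omega))) (pow_nu_dvd hn (hpos r (by omega)))
    rw [sum_range_succ]
    omega

theorem add_one_mod_of_not_dvd {b n : ℕ} (h : ¬ n ∣ b + 1) : (b + 1) % n = b % n + 1 := by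
  rcases Nat.eq_zero_or_pos n with rfl | hn
  · simp
  have hlt : b % n + 1 < n := by
    refine lt_of_le_of_ne (Nat.mod_lt b hn) fun heq => h ⟨b / n + 1, ?_⟩
    have := Nat.div_add_mod b n
    rw [mul_add, mul_one]
    omega
  rw [Nat.add_mod, Nat.mod_eq_of_lt (b := n) (a := 1) (by omega), Nat.mod_eq_of_lt hlt]

def digit (n e x : ℕ) : ℕ := x / n ^ e % n

section Digits

variable {n : ℕ}

theorem digit_mul_pow_of_lt {a e k : ℕ} (hn : 0 < n) (h : e < k) :
    digit n e (a * n ^ k) = 0 := by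
  rw [digit, show k = (k - e - 1) + 1 + e by omega, pow_add, ← mul_assoc,
    Nat.mul_div_cancel _ (pow_pos hn e), pow_succ, ← mul_assoc, Nat.mul_mod_left]

theorem digit_add_mul_pow (a j k : ℕ) (hn : 0 < n) :
    digit n (k + j) (a * n ^ k) = digit n j a := by
  rw [digit, digit, add_comm k j, pow_add, Nat.mul_div_mul_right _ _ (pow_pos hn k)]

theorem digit_eq_digit_sub_one_add {a : ℕ} (j : ℕ) (ha : ¬ n ∣ a) :
    digit n j a = digit n j (a - 1) + if j = 0 then 1 else 0 := by
  obtain ⟨b, rfl⟩ : ∃ b, a = b + 1 := ⟨a - 1, by rcases a with _ | a <;> simp_all⟩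
  rcases j with _ | j
  · simp [digit, add_one_mod_of_not_dvd ha]
  · have hj : ¬ n ^ (j + 1) ∣ b + 1 := fun h => ha ((dvd_pow_self n j.succ_ne_zero).trans h)
    simp [digit, Nat.succ_div_of_not_dvd hj]

end Digits

noncomputable def peel (n x : ℕ) : ℕ := x - n ^ nu n x

section Peel

variable {n x : ℕ}

theorem pow_nu_add_peel (hn : 2 ≤ n) (hx : x ≠ 0) : n ^ nu n x + peel n x = x := by
  have := Nat.le_of_dvd (Nat.pos_of_ne_zero hx) (pow_nu_dvd hn hx)
  rw [peel]
  omega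

theorem peel_le_sub_one (hn : 2 ≤ n) (x : ℕ) : peel n x ≤ x - 1 :=
  Nat.sub_le_sub_left (Nat.one_le_pow _ _ (by omega)) x

theorem peel_lt (hn : 2 ≤ n) (hx : x ≠ 0) : peel n x < x := by
  have := peel_le_sub_one hn x
  omega

theorem nu_le_nu_peel (hn : 2 ≤ n) (h : peel n x ≠ 0) : nu n x ≤ nu n (peel n x) :=
  le_nu_of_pow_dvd hn h (Nat.dvd_sub (pow_nu_dvd hn (by rintro rfl; simp [peel] at h)) dvd_rfl)

theorem digit_eq_digit_peel_add (hn : 2 ≤ n) (hx : x ≠ 0) (e : ℕ) :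
    digit n e x = digit n e (peel n x) + if nu n x = e then 1 else 0 := by
  set k := nu n x
  set a := x / n ^ k
  have hxa : x = a * n ^ k := (Nat.div_mul_cancel (pow_nu_dvd hn hx)).symm
  have hpeel : peel n x = (a - 1) * n ^ k := by rw [Nat.sub_mul, one_mul, ← hxa]; rfl
  have hna : ¬ n ∣ a := not_dvd_div_pow_nu hn hx
  rw [hpeel, hxa]
  rcases lt_or_ge e k with h | h
  · rw [digit_mul_pow_of_lt (by omega) h, digit_mul_pow_of_lt (by omega) h, if_neg (by omega)]
  · obtain ⟨j, rfl⟩ := Nat.exists_eq_add_of_le h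
    rw [digit_add_mul_pow _ _ _ (by omega), digit_add_mul_pow _ _ _ (by omega),
      digit_eq_digit_sub_one_add j hna]
    simp

theorem iterate_peel_le_sub (hn : 2 ≤ n) (m k : ℕ) : (peel n)^[k] m ≤ m - k := by
  induction k with
  | zero => simp
  | succ k ih =>
    rw [Function.iterate_succ_apply']
    exact (peel_le_sub_one hn _).trans (by omega)

end Peel

section Greedy

variable {n m r : ℕ}

theorem sum_range_pow_nu_iterate_peel (hn : 2 ≤ n) (hr : ∀ k < r, (peel n)^[k] m ≠ 0) :
    ∑ k ∈ range r, n ^ nu n ((peel n)^[k] m) + (peel n)^[r] m = m :=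
  sum_range_add_eq_of_eq_add (u := fun k => (peel n)^[k] m) fun k hk => by
    rw [Function.iterate_succ_apply', pow_nu_add_peel hn (hr k hk)]

theorem sum_range_ite_nu_iterate_peel (hn : 2 ≤ n) (hr : ∀ k < r, (peel n)^[k] m ≠ 0)
    (e : ℕ) :
    ∑ k ∈ range r, (if nu n ((peel n)^[k] m) = e then 1 else 0) + digit n e ((peel n)^[r] m) =
      digit n e m :=
  sum_range_add_eq_of_eq_add (u := fun k => digit n e ((peel n)^[k] m)) fun k hk => by
    rw [Function.iterate_succ_apply', digit_eq_digit_peel_add hn (hr k hk), add_comm]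

end Greedy

theorem exists_iterate_peel_chain {n : ℕ} (hn : 2 ≤ n) (m : ℕ) :
    ∃ r, (∀ k < r, (peel n)^[k] m ≠ 0) ∧
      ∑ k ∈ range r, n ^ nu n ((peel n)^[k] m) = m ∧
      ∀ e, #{k ∈ range r | nu n ((peel n)^[k] m) = e} < n := by
  have h : ∃ r, (peel n)^[r] m = 0 := ⟨m, by have := iterate_peel_le_sub hn m m; omega⟩
  have hne : ∀ k < Nat.find h, (peel n)^[k] m ≠ 0 := fun _ hk => Nat.find_min h hk
  refine ⟨Nat.find h, hne, ?_, fun e => ?_⟩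
  · simpa [Nat.find_spec h] using sum_range_pow_nu_iterate_peel hn hne
  · have hcount := sum_range_ite_nu_iterate_peel hn hne e
    rw [Nat.find_spec h, digit, Nat.zero_div, Nat.zero_mod, add_zero] at hcount
    rw [card_filter, hcount]
    exact Nat.mod_lt _ (by omega)

theorem stmt7_general (n m : ℕ) (hn : 2 ≤ n) :
    IsGreatest {S : ℕ | ∃ (r : ℕ) (t : ℕ → ℕ),
        (∀ i, 1 ≤ i → i ≤ r → 1 ≤ t i ∧ t i ≤ m) ∧
        (∀ i, 1 ≤ i → i < r → t (i + 1) < t i) ∧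
        (∀ i, 1 ≤ i → i < r → nu n (t i) ≤ nu n (t (i + 1))) ∧
        (∀ e : ℕ, ((Finset.Icc 1 r).filter fun i => nu n (t i) = e).card ≤ n - 1) ∧
        S = ∑ i ∈ Finset.Icc 1 r, n ^ nu n (t i)} m := by
  refine ⟨?_, ?_⟩
  · obtain ⟨r, hne, hsum, hcount⟩ := exists_iterate_peel_chain hn m
    refine ⟨r, fun i => (peel n)^[i - 1] m, fun i hi hir => ⟨?_, ?_⟩, fun i hi hir => ?_,
      fun i hi hir => ?_, fun e => ?_, by simpa [sum_Icc_one_eq_sum_range] using hsum.symm⟩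
    · exact Nat.one_le_iff_ne_zero.mpr (hne _ (by omega))
    · exact (iterate_peel_le_sub hn m _).trans (Nat.sub_le _ _)
    · obtain ⟨k, rfl⟩ : ∃ k, i = k + 1 := ⟨i - 1, by omega⟩
      simpa [Function.iterate_succ_apply'] using peel_lt hn (hne k (by omega))
    · obtain ⟨k, rfl⟩ : ∃ k, i = k + 1 := ⟨i - 1, by omega⟩
      have hpeel : peel n ((peel n)^[k] m) ≠ 0 := by
        simpa [Function.iterate_succ_apply'] using hne (k + 1) hir
      simpa [Function.iterate_succ_apply'] using nu_le_nu_peel hn hpeel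
    · have hcard := hcount e
      rw [card_filter] at hcard ⊢
      simp only [sum_Icc_one_eq_sum_range, Nat.add_sub_cancel]
      omega
  · rintro S ⟨r, t, hbd, hdec, hmono, -, rfl⟩
    rw [sum_Icc_one_eq_sum_range]
    rcases Nat.eq_zero_or_pos r with rfl | hr
    · simp
    calc ∑ k ∈ range r, n ^ nu n (t (k + 1))
        ≤ t 1 := sum_range_pow_nu_le hn
          (fun k hk => Nat.one_le_iff_ne_zero.mp (hbd _ (by omega) (by omega)).1)
          (fun k hk => hdec _ (by omega) (by omega)) (fun k hk => hmono _ (by omega) (by omega))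
      _ ≤ m := (hbd 1 le_rfl hr).2

/-- Combinatorial content of the `I`-gadget: the maximum, over all `r ≥ 0` and sequences
`m ≥ t_1 > t_2 > ⋯ > t_r ≥ 1` with `ν(t_1) ≤ ν(t_2) ≤ ⋯ ≤ ν(t_r)` and such that for every
`e` at most `n - 1` indices `i` satisfy `ν(t_i) = e`, of `Σ_i n ^ ν(t_i)`, equals `m`. -/
theorem stmt7 (n m : ℕ) (hn : 2 ≤ n) (hm : 1 ≤ m) :
    IsGreatest {S : ℕ | ∃ (r : ℕ) (t : ℕ → ℕ),
        (∀ i, 1 ≤ i → i ≤ r → 1 ≤ t i ∧ t i ≤ m) ∧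
        (∀ i, 1 ≤ i → i < r → t (i + 1) < t i) ∧
        (∀ i, 1 ≤ i → i < r → nu n (t i) ≤ nu n (t (i + 1))) ∧
        (∀ e : ℕ, ((Finset.Icc 1 r).filter fun i => nu n (t i) = e).card ≤ n - 1) ∧
        S = ∑ i ∈ Finset.Icc 1 r, n ^ nu n (t i)} m :=
  stmt7_general n m hn
end

section
/- Let k be a positive integer divisible by 3, let V be a finite set, let W₀ ≥ 1 be an integer, and let w : V × V → ℤ be symmetric with w(u,u) = 0 for all u and 1 ≤ w(u,v) ≤ W₀ for all u ≠ v. Set Λ = k²·W₀ and define w'(u,v) = w(u,v) + Λ for u ≠ v and w'(u,u) = 0. For subsets A, B ⊆ V define W'(A,B) = Σ_{{u,v} ⊆ A, u ≠ v} w'(u,v) + Σ_{(u,v) ∈ A × B} w'(u,v), and for subsets A, B, C ⊆ V each of size k/3 define S(A,B,C) = W'(A,B) + W'(B,C) + W'(C,A). Then: (i) if A, B, C are pairwise disjoint, S(A,B,C) ≥ C(k,2)·Λ, where C(k,2) = k(k−1)/2; and (ii) if A, B, C are not pairwise disjoint, S(A,B,C) ≤ (C(k,2)−1)·(Λ + W₀)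 < C(k,2)·Λ. -/
/-!
Every summand of `S` is a weight `w' u v`, and `S` has exactly `C(#A + #B + #C, 2)` summands,
of which `#(A ∩ B) + #(B ∩ C) + #(C ∩ A)` are diagonal ones `w' u u = 0`. Sandwiching `w'` between
multiples of the off-diagonal indicator, `Λ·[u ≠ v] ≤ w' u v ≤ (Λ + W₀)·[u ≠ v]`, gives both
bounds; the strict inequality reduces to `C(k, 2) ≤ k²`.
-/

/-- `Wsum w' A B` is `Σ_{{u,v} ⊆ A, u ≠ v} w'(u,v) + Σ_{(u,v) ∈ A × B} w'(u,v)`, where the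
first sum ranges over unordered pairs of distinct elements of `A` (represented as ordered
pairs `u < v`) and the second over all ordered pairs in `A × B`. -/
def Wsum {V : Type*} [DecidableEq V] [LinearOrder V] (w' : V → V → ℤ)
    (A B : Finset V) : ℤ :=
  (∑ u ∈ A, ∑ v ∈ A.filter (fun v => u < v), w' u v) + ∑ u ∈ A, ∑ v ∈ B, w' u v

open Finset

theorem Nat.add_choose_two (a b : ℕ) : (a + b).choose 2 = a.choose 2 + b.choose 2 + a * b := by
  simp [Nat.add_choose_eq, Finset.Nat.antidiagonal_succ]
  ring

section
variable {V : Type*} [LinearOrder V]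

theorem Wsum_mono {w₁ w₂ : V → V → ℤ} (h : ∀ u v, w₁ u v ≤ w₂ u v) (A B : Finset V) :
    Wsum w₁ A B ≤ Wsum w₂ A B := by
  unfold Wsum
  gcongr with u _ v _ u _ v _ <;> exact h u v

theorem Wsum_cyclic_mono {w₁ w₂ : V → V → ℤ} (h : ∀ u v, w₁ u v ≤ w₂ u v) (A B C : Finset V) :
    Wsum w₁ A B + Wsum w₁ B C + Wsum w₁ C A ≤ Wsum w₂ A B + Wsum w₂ B C + Wsum w₂ C A :=
  add_le_add (add_le_add (Wsum_mono h A B) (Wsum_mono h B C)) (Wsum_mono h C A)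

theorem Wsum_const_mul (c : ℤ) (w : V → V → ℤ) (A B : Finset V) :
    Wsum (fun u v => c * w u v) A B = c * Wsum w A B := by
  simp only [Wsum, mul_add, mul_sum]

theorem Wsum_offDiag_one (A B : Finset V) :
    Wsum (fun u v => if u = v then 0 else 1) A B = (#A).choose 2 + #A * #B - #(A ∩ B) := by
  have pairs : ∑ u ∈ A, ∑ v ∈ A with u < v, (if u = v then (0 : ℤ) else 1) = (#A).choose 2 := by
    rw [← card_product_filter_lt, card_filter, sum_product]
    push_cast
    refine sum_congr rfl fun u _ => ?_
    rw [sum_filter]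
    refine sum_congr rfl fun v _ => ?_
    split_ifs <;> simp_all
  have cross : ∑ u ∈ A, ∑ v ∈ B, (if u = v then (0 : ℤ) else 1) = #A * #B - #(A ∩ B) := by
    have one_sub : ∀ u v : V, (if u = v then (0 : ℤ) else 1) = 1 - if u = v then 1 else 0 := by
      intro u v; split_ifs <;> simp
    simp only [one_sub, sum_sub_distrib, sum_const, sum_ite_eq, sum_boole, filter_mem_eq_inter,
      nsmul_eq_mul, mul_one]
  rw [Wsum, pairs, cross]
  ring

theorem Wsum_offDiag_one_cyclic (A B C : Finset V) :
    let δ : V → V → ℤ := fun u v => if u = v then 0 else 1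
    Wsum δ A B + Wsum δ B C + Wsum δ C A =
      (#A + #B + #C).choose 2 - ((#(A ∩ B) + #(B ∩ C) + #(C ∩ A) : ℕ) : ℤ) := by
  simp only [Wsum_offDiag_one, Nat.add_choose_two]
  push_cast
  ring

theorem card_inter_add_card_inter_add_card_inter_eq_zero_iff (A B C : Finset V) :
    #(A ∩ B) + #(B ∩ C) + #(C ∩ A) = 0 ↔ Disjoint A B ∧ Disjoint B C ∧ Disjoint A C := by
  simp only [Nat.add_eq_zero_iff, card_eq_zero, ← disjoint_iff_inter_eq_empty, disjoint_comm,
    and_assoc]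

end

theorem stmt8_general {V : Type*} [LinearOrder V] (k : ℕ) (hk3 : 3 ∣ k)
    (W₀ : ℤ) (hW₀ : 1 ≤ W₀) (w : V → V → ℤ)
    (hbound : ∀ u v, u ≠ v → 1 ≤ w u v ∧ w u v ≤ W₀)
    (A B C : Finset V) (hA : A.card = k / 3) (hB : B.card = k / 3) (hC : C.card = k / 3) :
    let Λ : ℤ := (k : ℤ) ^ 2 * W₀
    let w' : V → V → ℤ := fun u v => if u = v then 0 else w u v + Λ
    let S : ℤ := Wsum w' A B + Wsum w' B C + Wsum w' C A
    ((Disjoint A B ∧ Disjoint B C ∧ Disjoint A C) →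
        (k.choose 2 : ℤ) * Λ ≤ S) ∧
    (¬(Disjoint A B ∧ Disjoint B C ∧ Disjoint A C) →
        S ≤ ((k.choose 2 : ℤ) - 1) * (Λ + W₀) ∧
        ((k.choose 2 : ℤ) - 1) * (Λ + W₀) < (k.choose 2 : ℤ) * Λ) := by
  intro Λ w' S
  set δ : V → V → ℤ := fun u v => if u = v then 0 else 1
  set overlap : ℕ := #(A ∩ B) + #(B ∩ C) + #(C ∩ A)
  have count : Wsum δ A B + Wsum δ B C + Wsum δ C A = k.choose 2 - overlap := by
    rw [Wsum_offDiag_one_cyclic, hA, hB, hC, show k / 3 + k / 3 + k / 3 = k by omega]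
  have lower (u v : V) : Λ * δ u v ≤ w' u v := by
    by_cases h : u = v
    · simp [δ, w', h]
    · simp only [δ, w', h, if_false]
      linarith [(hbound u v h).1]
  have upper (u v : V) : w' u v ≤ (Λ + W₀) * δ u v := by
    by_cases h : u = v
    · simp [δ, w', h]
    · simp only [δ, w', h, if_false]
      linarith [(hbound u v h).2]
  have S_ge : Λ * (k.choose 2 - overlap) ≤ S := by
    simpa only [Wsum_const_mul, ← mul_add, count] using Wsum_cyclic_mono lower A B C
  have S_le : S ≤ (Λ + W₀) * (k.choose 2 - overlap) := by
    simpa only [Wsum_const_mul, ← mul_add, count] using Wsum_cyclic_mono upper A B C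
  have overlap_eq_zero_iff : overlap = 0 ↔ Disjoint A B ∧ Disjoint B C ∧ Disjoint A C :=
    card_inter_add_card_inter_add_card_inter_eq_zero_iff A B C
  refine ⟨fun hdisj => ?_, fun hdisj => ⟨?_, ?_⟩⟩
  · rw [overlap_eq_zero_iff.mpr hdisj, Nat.cast_zero, sub_zero] at S_ge
    linarith
  · have : 1 ≤ overlap := Nat.one_le_iff_ne_zero.mpr (mt overlap_eq_zero_iff.mp hdisj)
    have : 0 ≤ Λ + W₀ := by positivity
    nlinarith
  · have : (k.choose 2 : ℤ) ≤ k ^ 2 := by exact_mod_cast Nat.choose_le_pow k 2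
    nlinarith

/-- After adding `Λ = k² W₀` to every off-diagonal weight, every triple of pairwise disjoint
`k/3`-sets has score at least `C(k,2)·Λ`, while every non-pairwise-disjoint triple has score
at most `(C(k,2) - 1)·(Λ + W₀) < C(k,2)·Λ`. -/
theorem stmt8 {V : Type*} [Fintype V] [LinearOrder V] (k : ℕ) (hk : 0 < k) (hk3 : 3 ∣ k)
    (W₀ : ℤ) (hW₀ : 1 ≤ W₀) (w : V → V → ℤ)
    (hsym : ∀ u v, w u v = w v u) (hdiag : ∀ u, w u u = 0)
    (hbound : ∀ u v, u ≠ v → 1 ≤ w u v ∧ w u v ≤ W₀)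
    (A B C : Finset V) (hA : A.card = k / 3) (hB : B.card = k / 3) (hC : C.card = k / 3) :
    let Λ : ℤ := (k : ℤ) ^ 2 * W₀
    let w' : V → V → ℤ := fun u v => if u = v then 0 else w u v + Λ
    let S : ℤ := Wsum w' A B + Wsum w' B C + Wsum w' C A
    ((Disjoint A B ∧ Disjoint B C ∧ Disjoint A C) →
        (k.choose 2 : ℤ) * Λ ≤ S) ∧
    (¬(Disjoint A B ∧ Disjoint B C ∧ Disjoint A C) →
        S ≤ ((k.choose 2 : ℤ) - 1) * (Λ + W₀) ∧
        ((k.choose 2 : ℤ) - 1) * (Λ + W₀) < (k.choose 2 : ℤ) * Λ) :=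
  stmt8_general k hk3 W₀ hW₀ w hbound A B C hA hB hC
end

section
/- In any valid matching R between the left caterpillar F with n spine nodes and the right caterpillar G with m spine nodes, at most one pair of R consists of a spine node of F and a leaf node of G, and at most one pair of R consists of a leaf node of F and a spine node of G. -/
namespace CatNode

lemma anc_or_anc_of_spine {u v : CatNode} (hu : u.1 = false) (hv : v.1 = false)
    (huv : u ≠ v) : Anc u v ∨ Anc v u := by
  have hidx : u.2 ≠ v.2 := fun h => huv (Prod.ext (hu.trans hv.symm) h)
  rcases lt_or_gt_of_ne hidx with h | h
  · exact Or.inl ⟨hu, Or.inl ⟨hv, h⟩⟩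
  · exact Or.inr ⟨hv, Or.inl ⟨hu, h⟩⟩

lemma not_anc_of_leaf {u : CatNode} (hu : u.1 = true) (v : CatNode) : ¬ Anc u v := by
  simp [Anc, hu]

lemma eq_of_spine_of_anc_iff_leaf {u v u' v' : CatNode} (hu : u.1 = false)
    (hv : v.1 = false) (hu' : u'.1 = true) (hv' : v'.1 = true)
    (huv : Anc u v ↔ Anc u' v') (hvu : Anc v u ↔ Anc v' u') : u = v := by
  by_contra hne
  rcases anc_or_anc_of_spine hu hv hne with h | h
  · exact not_anc_of_leaf hu' v' (huv.mp h)
  · exact not_anc_of_leaf hv' u' (hvu.mp h)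

end CatNode

theorem stmt12_general (n m : ℕ)
    (R : Finset (CatNode × CatNode)) (hR : ValidMatching n m R) :
    (∀ p ∈ R, ∀ q ∈ R,
      p.1.1 = false → p.2.1 = true → q.1.1 = false → q.2.1 = true → p = q) ∧
    (∀ p ∈ R, ∀ q ∈ R,
      p.1.1 = true → p.2.1 = false → q.1.1 = true → q.2.1 = false → p = q) := by
  obtain ⟨-, hinj, hanc, -⟩ := hR
  constructor
  · intro p hp q hq hp1 hp2 hq1 hq2
    by_contra hne
    exact (hinj p hp q hq hne).1 <|
      CatNode.eq_of_spine_of_anc_iff_leaf hp1 hq1 hp2 hq2 (hanc p hp q hq) (hanc q hq p hp)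
  · intro p hp q hq hp1 hp2 hq1 hq2
    by_contra hne
    exact (hinj p hp q hq hne).2 <|
      CatNode.eq_of_spine_of_anc_iff_leaf hp2 hq2 hp1 hq1
        (hanc p hp q hq).symm (hanc q hq p hp).symm

/-- In any valid matching, at most one pair consists of a spine node of `F` and a leaf of
`G`, and at most one pair consists of a leaf of `F` and a spine node of `G`. -/
theorem stmt12 (n m : ℕ) (hn : 1 ≤ n) (hm : 1 ≤ m)
    (R : Finset (CatNode × CatNode)) (hR : ValidMatching n m R) :
    (∀ p ∈ R, ∀ q ∈ R,
      p.1.1 = false → p.2.1 = true → q.1.1 = false → q.2.1 = true → p = q) ∧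
    (∀ p ∈ R, ∀ q ∈ R,
      p.1.1 = true → p.2.1 = false → q.1.1 = true → q.2.1 = false → p = q) :=
  stmt12_general n m R hR
end

section
/- If (f'_a, g'_b) and (f'_{a'}, g'_{b'}) are two distinct leaf–leaf pairs of a valid matching R between the left caterpillar F and the right caterpillar G, and a < a', then b' < b; that is, the leaf–leaf pairs of any valid matching match the leaves of F to the leaves of G in reversed order of indices. -/
-- `ha'` keeps the truncated subtraction `2 * n + 1 - a'` in `posF` honest.
theorem posF_leaf_lt_posF_leaf {n a a' : ℕ} (hlt : a < a') (ha' : a' ≤ n) :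
    posF n (true, a') < posF n (true, a) := by
  simp only [posF, if_true]
  omega

theorem posG_leaf_lt_posG_leaf_iff {b b' : ℕ} :
    posG (true, b') < posG (true, b) ↔ b' < b := by
  simp only [posG, if_true]
  omega

theorem stmt13_general (n m : ℕ)
    (R : Finset (CatNode × CatNode)) (hR : ValidMatching n m R)
    (a b a' b' : ℕ)
    (h₁ : (((true, a) : CatNode), ((true, b) : CatNode)) ∈ R)
    (h₂ : (((true, a') : CatNode), ((true, b') : CatNode)) ∈ R)
    (hlt : a < a') : b' < b := by
  obtain ⟨hbounds, -, -, hpreorder⟩ := hR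
  have ha' : a' ≤ n := (hbounds _ h₂).2.1
  exact posG_leaf_lt_posG_leaf_iff.mp
    ((hpreorder _ h₂ _ h₁).mp (posF_leaf_lt_posF_leaf hlt ha'))

/-- The leaf–leaf pairs of any valid matching match the leaves of `F` to the leaves of `G`
in reversed order of indices: if `(f'_a, g'_b)` and `(f'_{a'}, g'_{b'})` are in `R` and
`a < a'`, then `b' < b`. -/
theorem stmt13 (n m : ℕ) (hn : 1 ≤ n) (hm : 1 ≤ m)
    (R : Finset (CatNode × CatNode)) (hR : ValidMatching n m R)
    (a b a' b' : ℕ)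
    (h₁ : (((true, a) : CatNode), ((true, b) : CatNode)) ∈ R)
    (h₂ : (((true, a') : CatNode), ((true, b') : CatNode)) ∈ R)
    (hlt : a < a') : b' < b :=
  stmt13_general n m R hR a b a' b' h₁ h₂ hlt
end

section
/- Let R be a valid matching between the left caterpillar F with n spine nodes and the right caterpillar G with m spine nodes, and suppose R contains a pair (f_a, g'_b) consisting of a spine node of F and a leaf of G, such that no other pair of R involves a node f_{a''} or f'_{a''} of F with a'' ≥ a. Then for every a' with a ≤ a' ≤ n, the set R' = (R \ {(f_a, g'_b)}) ∪ {(f_{a'}, g'_b)} is also a valid matching between F and G. -/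
/-! Every pair of `R` other than `(f_a, g'_b)` lives strictly above level `a` of `F`, and from
such a node `w` the spine nodes `f_a` and `f_{a'}` (`a ≤ a' ≤ n`) are indistinguishable: both are
proper descendants of `w` exactly when `w` is a spine node, and in the preorder of `F` both come
after every spine node above them and before every leaf `f'_c` with `c < a`. So moving the
matched node from `f_a` to `f_{a'}` changes none of the relations a valid matching constrains. -/

def RelateAlike (n : ℕ) (w u u' : CatNode) : Prop :=
  (Anc u w ↔ Anc u' w) ∧ (Anc w u ↔ Anc w u') ∧
    (posF n u < posF n w ↔ posF n u' < posF n w) ∧ (posF n w < posF n u ↔ posF n w < posF n u')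

theorem anc_irrefl (u : CatNode) : ¬ Anc u u := by
  rintro ⟨hu, ⟨-, h⟩ | ⟨hu', -⟩⟩
  · exact lt_irrefl _ h
  · exact Bool.false_ne_true (hu.symm.trans hu')

theorem relateAlike_spine {n a a' : ℕ} (ha' : a ≤ a') (ha'n : a' ≤ n) {w : CatNode}
    (hw : w.2 < a) : RelateAlike n w (false, a) (false, a') := by
  obtain ⟨_ | _, c⟩ := w <;> simp [RelateAlike, Anc, posF] at hw ⊢ <;> omega

theorem ValidMatching.insert_erase_of_relateAlike {n m : ℕ} {R : Finset (CatNode × CatNode)}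
    (hR : ValidMatching n m R) {u u' v : CatNode} (huv : (u, v) ∈ R)
    (hu' : 1 ≤ u'.2 ∧ u'.2 ≤ n)
    (halike : ∀ p ∈ R, p ≠ (u, v) → p.1 ≠ u' ∧ RelateAlike n p.1 u u') :
    ValidMatching n m (insert (u', v) (R.erase (u, v))) := by
  obtain ⟨hB, hI, hA, hP⟩ := hR
  have hmem : ∀ q ∈ insert (u', v) (R.erase (u, v)),
      q = (u', v) ∨ (q ∈ R ∧ q ≠ (u, v) ∧ q.1 ≠ u' ∧ RelateAlike n q.1 u u') := by
    intro q hq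
    rcases Finset.mem_insert.1 hq with rfl | hq
    · exact Or.inl rfl
    · obtain ⟨hne, hqR⟩ := Finset.mem_erase.1 hq
      exact Or.inr ⟨hqR, hne, halike q hqR hne⟩
  refine ⟨?_, ?_, ?_, ?_⟩
  · intro p hp
    rcases hmem p hp with rfl | ⟨hpR, -⟩
    · exact ⟨hu'.1, hu'.2, (hB _ huv).2.2⟩
    · exact hB p hpR
  · intro p hp q hq hne
    rcases hmem p hp with rfl | ⟨hpR, hpne, hpu', -⟩ <;>
      rcases hmem q hq with rfl | ⟨hqR, hqne, hqu', -⟩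
    · exact absurd rfl hne
    · exact ⟨Ne.symm hqu', fun h => (hI q hqR _ huv hqne).2 h.symm⟩
    · exact ⟨hpu', (hI p hpR _ huv hpne).2⟩
    · exact hI p hpR q hqR hne
  · intro p hp q hq
    rcases hmem p hp with rfl | ⟨hpR, -, -, hp⟩ <;>
      rcases hmem q hq with rfl | ⟨hqR, -, -, hq⟩
    · exact iff_of_false (anc_irrefl _) (anc_irrefl _)
    · exact hq.1.symm.trans (hA _ huv q hqR)
    · exact hp.2.1.symm.trans (hA p hpR _ huv)
    · exact hA p hpR q hqR
  · intro p hp q hq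
    rcases hmem p hp with rfl | ⟨hpR, -, -, hp⟩ <;>
      rcases hmem q hq with rfl | ⟨hqR, -, -, hq⟩
    · exact iff_of_false (lt_irrefl _) (lt_irrefl _)
    · exact hq.2.2.1.symm.trans (hP _ huv q hqR)
    · exact hp.2.2.2.symm.trans (hP p hpR _ huv)
    · exact hP p hpR q hqR

theorem stmt14_general (n m : ℕ)
    (R : Finset (CatNode × CatNode)) (hR : ValidMatching n m R)
    (a b : ℕ) (hab : (((false, a) : CatNode), ((true, b) : CatNode)) ∈ R)
    (hmax : ∀ p ∈ R, p ≠ (((false, a) : CatNode), ((true, b) : CatNode)) → p.1.2 < a)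
    (a' : ℕ) (ha' : a ≤ a') (ha'n : a' ≤ n) :
    ValidMatching n m
      (insert (((false, a') : CatNode), ((true, b) : CatNode))
        (R.erase (((false, a) : CatNode), ((true, b) : CatNode)))) := by
  refine hR.insert_erase_of_relateAlike hab ⟨(hR.1 _ hab).1.trans ha', ha'n⟩ fun p hp hne => ?_
  have hpa := hmax p hp hne
  exact ⟨fun h => (hpa.trans_le ha').ne (congrArg Prod.snd h), relateAlike_spine ha' ha'n hpa⟩

/-- If `(f_a, g'_b) ∈ R` is a spine–leaf pair such that no other pair of `R` involves a node
`f_{a''}` or `f'_{a''}` of `F` with `a'' ≥ a`, then replacing `f_a` by any deeper spine node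
`f_{a'}` (with `a ≤ a' ≤ n`) again yields a valid matching. -/
theorem stmt14 (n m : ℕ) (hn : 1 ≤ n) (hm : 1 ≤ m)
    (R : Finset (CatNode × CatNode)) (hR : ValidMatching n m R)
    (a b : ℕ) (hab : (((false, a) : CatNode), ((true, b) : CatNode)) ∈ R)
    (hmax : ∀ p ∈ R, p ≠ (((false, a) : CatNode), ((true, b) : CatNode)) → p.1.2 < a)
    (a' : ℕ) (ha' : a ≤ a') (ha'n : a' ≤ n) :
    ValidMatching n m
      (insert (((false, a') : CatNode), ((true, b) : CatNode))
        (R.erase (((false, a) : CatNode), ((true, b) : CatNode)))) :=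
  stmt14_general n m R hR a b hab hmax a' ha' ha'n
end
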